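/- For all k ≥ 1, in the ring R: G_{k_c} − G_{k_b} = E_{k_c}, and E_{k_c} = c q^k (E_{k_c} + E_{k_a} + G_{(k−1)_c}). -/

import Mathlib

/-! A Primc partition with largest part `k_c` (`k ≥ 1`) is `k_c` followed by a Primc partition
whose largest part `q` satisfies the difference condition after `k_c`; since `D(c,a) = D(c,c) = 0`,
`D(c,b) = 1` and `D(c,d) = 2`, these are exactly `q ∈ {k_c, k_a}` and `q ≤ (k−1)_c`. Removing the
first part contributes the factor `c q^k`, which gives the second identity; the first one only
splits "largest part `≤ k_c`" into "`≤ k_b`" and "`= k_c`". -/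

open Finset PowerSeries

namespace Primc

/-- Colours: `0 = a`, `1 = b`, `2 = c`, `3 = d`. -/
abbrev Colour := Fin 4

/-- A coloured part `k_z`: an underlying integer `k` together with its colour `z`. -/
abbrev CPart := ℕ × Colour

/-- The matrix `D` of minimal differences, with rows and columns indexed by the colours
`a, b, c, d` in this order. -/
def Dmat : Colour → Colour → ℕ := ![![2,1,2,2], ![1,0,1,1], ![0,1,0,2], ![0,1,0,2]]

/-- The position of a coloured part in the total order
`1_a < 1_b < 1_c < 1_d < 2_a < 2_b < 2_c < 2_d < ⋯`. -/
def pos (p : CPart) : ℕ := 4 * p.1 + (p.2 : ℕ)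

/-- A Primc partition: a finite sequence of coloured positive integers, non-increasing in the
above total order, in which consecutive parts `λ_i, λ_{i+1}` of colours `x, y` satisfy
`λ_i − λ_{i+1} ≥ D(x,y)`. -/
def IsPrimc (l : List CPart) : Prop :=
  (∀ p ∈ l, 1 ≤ p.1) ∧
  l.Chain' fun p r => pos r ≤ pos p ∧ r.1 + Dmat p.2 r.2 ≤ p.1

/-- The weight of a coloured partition: the sum of the underlying integers of its parts. -/
def wt (l : List CPart) : ℕ := (l.map Prod.fst).sum

/-- The number of parts of colour `z`. -/
def nc (l : List CPart) (z : Colour) : ℕ := l.countP fun p => p.2 == z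

/-- `R₀ = ℤ[a,c,d]`, with `a = X 0`, `c = X 1`, `d = X 2`. -/
abbrev R0 := MvPolynomial (Fin 3) ℤ

/-- `R = ℤ[a,c,d][[q]]`. -/
abbrev R := PowerSeries R0

/-- The variable `q`. -/
noncomputable def qq : R := PowerSeries.X

/-- The variable `a`. -/
noncomputable def av : R0 := MvPolynomial.X 0

/-- The variable `c`. -/
noncomputable def cv : R0 := MvPolynomial.X 1

/-- The variable `d`. -/
noncomputable def dv : R0 := MvPolynomial.X 2

/-- The monomial `a^{#(a-parts)} c^{#(c-parts)} d^{#(d-parts)}` attached to a coloured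
partition. -/
noncomputable def mono (l : List CPart) : R0 := av ^ nc l 0 * cv ^ nc l 2 * dv ^ nc l 3

/-- The infinite product `∏_{j ≥ 0} f j`, defined coefficientwise: the coefficient of `qⁿ` is
the corresponding coefficient of the partial product `∏_{j ≤ n} f j`.  This agrees with the
usual (coefficientwise convergent) infinite product whenever the factor `f j` is `≡ 1`
modulo `q^{j+1}`, as is the case for all products appearing here. -/
noncomputable def iprod (f : ℕ → R) : R :=
  PowerSeries.mk fun n => PowerSeries.coeff n (∏ j ∈ Finset.range (n + 1), f j)

/-- The largest part of a Primc partition (its parts being written in non-increasing order),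
with the convention that the empty partition has largest part `0_b`. -/
def top (l : List CPart) : CPart := l.headD (0, 1)

/-- `G_{k_x} ∈ R`: the sum of `q^{|λ|} a^{#(a-parts)} c^{#(c-parts)} d^{#(d-parts)}` over all
Primc partitions `λ` whose largest part is at most `k_x` in the colour order. -/
noncomputable def G (k : ℕ) (x : Colour) : R :=
  PowerSeries.mk fun n =>
    ∑ᶠ lam : {l : List CPart // IsPrimc l ∧ wt l = n ∧ pos (top l) ≤ pos (k, x)}, mono lam.1

/-- `E_{k_x} ∈ R`: the sum of `q^{|λ|} a^{#(a-parts)} c^{#(c-parts)} d^{#(d-parts)}` over all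
Primc partitions `λ` whose largest part is exactly `k_x` (so `E_{0_b} = 1`, the empty
partition having largest part `0_b` by convention). -/
noncomputable def E (k : ℕ) (x : Colour) : R :=
  PowerSeries.mk fun n =>
    ∑ᶠ lam : {l : List CPart // IsPrimc l ∧ wt l = n ∧ top l = (k, x)}, mono lam.1

theorem _root_.List.finite_setOf_forall_mem_length_le {α : Type*} {s : Set α} (hs : s.Finite)
    (n : ℕ) : {l : List α | (∀ x ∈ l, x ∈ s) ∧ l.length ≤ n}.Finite := by
  have := hs.to_subtype
  refine ((List.finite_length_le s n).image (List.map Subtype.val)).subset ?_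
  rintro l ⟨hl, hlen⟩
  exact ⟨l.pmap Subtype.mk hl, by simpa using hlen, by simp [List.map_pmap]⟩

lemma le_wt_of_mem {l : List CPart} {p : CPart} (hp : p ∈ l) : p.1 ≤ wt l :=
  List.single_le_sum (fun _ _ => Nat.zero_le _) _ (List.mem_map_of_mem hp)

lemma length_le_wt {l : List CPart} (hl : IsPrimc l) : l.length ≤ wt l := by
  simpa [wt] using List.length_le_sum_of_one_le (l.map Prod.fst) (by simpa using hl.1)

lemma finite_setOf_isPrimc_wt (n : ℕ) (S : List CPart → Prop) :
    {l : List CPart | IsPrimc l ∧ wt l = n ∧ S l}.Finite := by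
  refine ((List.finite_setOf_forall_mem_length_le
    ((Set.finite_Iic n).prod Set.finite_univ) n)).subset ?_
  rintro l ⟨hl, rfl, -⟩
  exact ⟨fun p hp => ⟨le_wt_of_mem hp, trivial⟩, length_le_wt hl⟩

noncomputable def genFun (S : List CPart → Prop) : R :=
  PowerSeries.mk fun n => ∑ᶠ lam : {l : List CPart // IsPrimc l ∧ wt l = n ∧ S l}, mono lam.1

lemma G_eq_genFun (k : ℕ) (x : Colour) : G k x = genFun fun l => pos (top l) ≤ pos (k, x) := rfl

lemma E_eq_genFun (k : ℕ) (x : Colour) : E k x = genFun fun l => top l = (k, x) := rfl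

lemma coeff_genFun (S : List CPart → Prop) (n : ℕ) :
    coeff n (genFun S) = ∑ᶠ l ∈ {l : List CPart | IsPrimc l ∧ wt l = n ∧ S l}, mono l := by
  rw [genFun, coeff_mk]
  exact finsum_set_coe_eq_finsum_mem (f := mono) _

lemma genFun_congr {S T : List CPart → Prop} (h : ∀ l, IsPrimc l → (S l ↔ T l)) :
    genFun S = genFun T := by
  ext n : 1
  have hset : {l | IsPrimc l ∧ wt l = n ∧ S l} = {l | IsPrimc l ∧ wt l = n ∧ T l} :=
    Set.ext fun l => and_congr_right fun hl => and_congr_right fun _ => h l hl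
  rw [coeff_genFun, coeff_genFun, hset]

lemma genFun_or {S T : List CPart → Prop} (h : ∀ l, S l → ¬ T l) :
    genFun (fun l => S l ∨ T l) = genFun S + genFun T := by
  ext n : 1
  have hunion : {l : List CPart | IsPrimc l ∧ wt l = n ∧ (S l ∨ T l)} =
      {l | IsPrimc l ∧ wt l = n ∧ S l} ∪ {l | IsPrimc l ∧ wt l = n ∧ T l} := by
    ext l
    simp only [Set.mem_ofPred_eq, Set.mem_union]
    tauto
  rw [map_add, coeff_genFun, coeff_genFun, coeff_genFun, hunion,
    finsum_mem_union _ (finite_setOf_isPrimc_wt n S) (finite_setOf_isPrimc_wt n T)]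
  exact Set.disjoint_left.2 fun l hS hT => h l hS.2.2 hT.2.2

def CanFollow (p q : CPart) : Prop := pos q ≤ pos p ∧ q.1 + Dmat p.2 q.2 ≤ p.1

lemma isPrimc_iff (l : List CPart) :
    IsPrimc l ↔ (∀ p ∈ l, 1 ≤ p.1) ∧ l.IsChain CanFollow := Iff.rfl

/-- Thanks to the convention `top [] = 0_b`, the empty tail needs no separate case. -/
lemma isPrimc_cons_iff {p : CPart} (hp : 1 ≤ p.1) (μ : List CPart) :
    IsPrimc (p :: μ) ↔ IsPrimc μ ∧ CanFollow p (top μ) := by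
  cases μ with
  | nil =>
    obtain ⟨k, x⟩ := p
    have : CanFollow (k, x) (0, 1) := by
      fin_cases x <;> simp [CanFollow, pos, Dmat] <;> omega
    simpa [isPrimc_iff, top, hp] using this
  | cons r t =>
    simp only [isPrimc_iff, List.forall_mem_cons, List.isChain_cons_cons, top, List.headD_cons]
    tauto

lemma wt_cons (p : CPart) (μ : List CPart) : wt (p :: μ) = p.1 + wt μ := by
  simp [wt]

lemma mono_cons (p : CPart) (μ : List CPart) : mono (p :: μ) = mono [p] * mono μ := by
  simp only [mono, nc, List.countP_cons, List.countP_nil]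
  split_ifs <;> ring

lemma exists_eq_cons_of_top_eq {l : List CPart} {p : CPart} (hp : 1 ≤ p.1) (h : top l = p) :
    ∃ μ, l = p :: μ := by
  cases l with
  | nil => subst h; simp [top] at hp
  | cons r μ => exact ⟨μ, by rw [← h]; rfl⟩

lemma E_eq_mul_genFun_canFollow {k : ℕ} (hk : 1 ≤ k) (x : Colour) :
    E k x = C (mono [(k, x)]) * qq ^ k * genFun fun μ => CanFollow (k, x) (top μ) := by
  ext n : 1
  rw [qq, mul_assoc, coeff_C_mul, coeff_X_pow_mul', E_eq_genFun, coeff_genFun]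
  split_ifs with hkn
  · have hcons : {l | IsPrimc l ∧ wt l = n ∧ top l = (k, x)} =
        ((k, x) :: ·) '' {μ | IsPrimc μ ∧ wt μ = n - k ∧ CanFollow (k, x) (top μ)} := by
      ext l
      constructor
      · rintro ⟨hl, hwt, htop⟩
        obtain ⟨μ, rfl⟩ := exists_eq_cons_of_top_eq hk htop
        rw [isPrimc_cons_iff hk] at hl
        rw [wt_cons] at hwt
        exact ⟨μ, ⟨hl.1, by simp only at hwt ⊢; omega, hl.2⟩, rfl⟩
      · rintro ⟨μ, ⟨hμ, hwt, hfollow⟩, rfl⟩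
        exact ⟨(isPrimc_cons_iff hk μ).2 ⟨hμ, hfollow⟩, by rw [wt_cons]; simp only; omega, rfl⟩
    rw [hcons, finsum_mem_image List.cons_injective.injOn, coeff_genFun, mul_finsum_mem]
    exact finsum_mem_congr rfl fun μ _ => mono_cons _ μ
  · rw [mul_zero]
    convert finsum_mem_empty
    refine Set.eq_empty_of_forall_notMem ?_
    rintro l ⟨-, hwt, htop⟩
    obtain ⟨μ, rfl⟩ := exists_eq_cons_of_top_eq hk htop
    exact hkn (hwt ▸ le_wt_of_mem (p := (k, x)) List.mem_cons_self)

lemma pos_le_kc_iff (k : ℕ) (q : CPart) :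
    pos q ≤ pos (k, 2) ↔ pos q ≤ pos (k, 1) ∨ q = (k, 2) := by
  obtain ⟨j, y⟩ := q
  fin_cases y <;> simp [pos] <;> omega

lemma canFollow_kc_iff {k : ℕ} (hk : 1 ≤ k) (q : CPart) :
    CanFollow (k, 2) q ↔ q = (k, 2) ∨ q = (k, 0) ∨ pos q ≤ pos (k - 1, 2) := by
  obtain ⟨j, y⟩ := q
  fin_cases y <;> simp [CanFollow, pos, Dmat] <;> omega

lemma mono_singleton_c (k : ℕ) : mono [(k, 2)] = cv := by
  simp [mono, nc]

/-- Equation (2.1b): for all `k ≥ 1`, `G_{k_c} − G_{k_b} = E_{k_c}` and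
`E_{k_c} = c q^k (E_{k_c} + E_{k_a} + G_{(k−1)_c})` in `R`. -/
theorem statement9 (k : ℕ) (hk : 1 ≤ k) :
    G k 2 - G k 1 = E k 2 ∧
    E k 2 = PowerSeries.C cv * qq ^ k * (E k 2 + E k 0 + G (k - 1) 2) := by
  constructor
  · rw [sub_eq_iff_eq_add', G_eq_genFun, G_eq_genFun, E_eq_genFun,
      genFun_congr fun l _ => pos_le_kc_iff k (top l)]
    exact genFun_or fun l hb hc => by rw [hc] at hb; simp [pos] at hb
  · conv_lhs => rw [E_eq_mul_genFun_canFollow hk, mono_singleton_c,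
      genFun_congr fun μ _ => canFollow_kc_iff hk (top μ)]
    rw [genFun_or, genFun_or, add_assoc]
    · rfl
    all_goals
      intro l htop
      simp [htop, pos]
      omega

end Primc
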